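/- Let (V,h) be a real quadratic space of signature (p,q) with p − q congruent to 3 or 7 modulo 8, and let η: Cl(V,h) → End_ℝ(Σ) and η': Cl(V,h) → End_ℝ(Σ') be irreducible real Clifford representations. Let J ∈ End_ℝ(Σ) satisfy J∘J = −id and commute with η(x) for all x, and let J' ∈ End_ℝ(Σ') satisfy J'∘J' = −id and commute with η'(x) for all x. Then every equivalence ψ: Σ → Σ' (an ℝ-linear bijection with ψ∘η(x) = η'(x)∘ψ for all x ∈ Cl(V,h)) satisfies either ψ∘J = J'∘ψ or ψ∘J = −J'∘ψ. -/

import Mathlib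

noncomputable section

namespace RealCliffordRep

/-- `(V,h)` has signature `(p,q)`: there is a basis `e₁,…,e_{p+q}` with
`h(eᵢ,eⱼ) = 0` for `i ≠ j`, `h(eᵢ,eᵢ) = 1` for `i ≤ p` and `h(eᵢ,eᵢ) = -1` for `i > p`. -/
def HasSignature {V : Type*} [AddCommGroup V] [Module ℝ V]
    (h : LinearMap.BilinForm ℝ V) (p q : ℕ) : Prop :=
  ∃ b : Module.Basis (Fin (p + q)) ℝ V, ∀ i j : Fin (p + q),
    h (b i) (b j) = if i = j then (if (i : ℕ) < p then 1 else -1) else 0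

/-- A real Clifford representation is irreducible if the only invariant real subspaces
of `Σ` are `0` and `Σ`. -/
def IsIrredReal {V : Type*} [AddCommGroup V] [Module ℝ V]
    {Sg : Type*} [AddCommGroup Sg] [Module ℝ Sg]
    (Q : QuadraticForm ℝ V) (η : CliffordAlgebra Q →ₐ[ℝ] Module.End ℝ Sg) : Prop :=
  ∀ W : Submodule ℝ Sg, (∀ (x : CliffordAlgebra Q), ∀ w ∈ W, η x w ∈ W) → W = ⊥ ∨ W = ⊤

end RealCliffordRep

/-! Since `p - q ≡ 3 (mod 4)`, `n = p + q` is odd, so the volume element `ω = e₁ ⋯ eₙ` of an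
orthogonal basis commutes with every generator, hence is central, and
`ω² = (-1) ^ (n(n-1)/2 + q) = -1`. By Schur's lemma an endomorphism commuting with an irreducible
`η` is zero or invertible, so an involution commuting with `η` is `±1` (from
`(T - 1)(T + 1) = 0`). A complex structure `T` commuting with `η` commutes with `η ω`, and
`T ∘ η ω` is such an involution; hence `T = ±η ω`. Applying this to `J` and to `ψ⁻¹ J' ψ` gives
`J = ±ψ⁻¹ J' ψ`. -/

theorem Nat.even_choose_two_iff : ∀ n : ℕ, Even (n.choose 2) ↔ n % 4 ≤ 1
  | 0 | 1 | 2 | 3 => by decide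
  | n + 4 => by
    have h : (n + 4).choose 2 = n.choose 2 + 2 * (2 * n + 3) := by
      simp only [Nat.choose_succ_succ', Nat.choose_one_right, Nat.choose_zero_right, zero_add,
        Nat.reduceAdd]
      omega
    rw [h, Nat.even_add, Nat.even_choose_two_iff n]
    simp only [even_two_mul, iff_true]
    omega

namespace List

variable {A : Type*} [Ring A]

theorem mul_prod_of_forall_anticomm {x : A} :
    ∀ {l : List A}, (∀ y ∈ l, x * y = -(y * x)) →
      x * l.prod = (-1 : ℤ) ^ l.length • (l.prod * x)
  | [], _ => by simp
  | a :: t, hl => by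
    have ht := mul_prod_of_forall_anticomm fun y hy => hl y (mem_cons_of_mem a hy)
    calc x * (a :: t).prod = -(a * (x * t.prod)) := by
          rw [prod_cons, ← mul_assoc, hl a mem_cons_self, neg_mul, mul_assoc]
      _ = (-1 : ℤ) ^ (a :: t).length • ((a :: t).prod * x) := by
          rw [ht, mul_smul_comm, length_cons, pow_succ, mul_neg_one, neg_smul, prod_cons,
            mul_assoc]

theorem mul_prod_of_pairwise_anticomm {x : A} :
    ∀ {l : List A}, l.Pairwise (fun a b => a * b = -(b * a)) → x ∈ l →
      x * l.prod = (-1 : ℤ) ^ (l.length - 1) • (l.prod * x)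
  | a :: t, hl, hx => by
    obtain ⟨ha, ht⟩ := pairwise_cons.mp hl
    rw [prod_cons, length_cons, Nat.add_sub_cancel]
    rcases mem_cons.mp hx with rfl | hxt
    · rw [mul_assoc, mul_prod_of_forall_anticomm ha, mul_smul_comm]
    · have hxa : x * a = -(a * x) := by rw [ha x hxt, neg_neg]
      obtain ⟨k, hk⟩ := Nat.exists_eq_succ_of_ne_zero (length_pos_of_mem hxt).ne'
      rw [← mul_assoc, hxa, neg_mul, mul_assoc, mul_prod_of_pairwise_anticomm ht hxt,
        hk, Nat.succ_sub_one, mul_smul_comm, ← neg_smul, pow_succ, mul_neg_one, mul_assoc]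

theorem prod_mul_self_of_pairwise_anticomm :
    ∀ {l : List A}, l.Pairwise (fun a b => a * b = -(b * a)) →
      l.prod * l.prod = (-1 : ℤ) ^ l.length.choose 2 • (l.map fun y => y * y).prod
  | [], _ => by simp
  | a :: t, hl => by
    obtain ⟨ha, ht⟩ := pairwise_cons.mp hl
    have hta : t.prod * a = (-1 : ℤ) ^ t.length • (a * t.prod) := by
      rw [mul_prod_of_forall_anticomm ha, smul_smul, ← pow_add, Even.neg_one_pow ⟨_, rfl⟩,
        one_smul]
    calc (a :: t).prod * (a :: t).prod = (-1 : ℤ) ^ t.length • (a * a * (t.prod * t.prod)) := by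
          rw [prod_cons, mul_assoc, ← mul_assoc t.prod, hta, smul_mul_assoc, mul_smul_comm,
            mul_assoc, mul_assoc]
      _ = _ := by
          rw [prod_mul_self_of_pairwise_anticomm ht, mul_smul_comm, smul_smul, ← pow_add,
            length_cons, Nat.choose_succ_succ', Nat.choose_one_right, map_cons, prod_cons]

end List

namespace CliffordAlgebra

variable {R M : Type*} [CommRing R] [AddCommGroup M] [Module R M]

def volumeElement (Q : QuadraticForm R M) {n : ℕ} (b : Fin n → M) : CliffordAlgebra Q :=
  (List.ofFn fun i => ι Q (b i)).prod

variable {Q : QuadraticForm R M} {n : ℕ} {b : Fin n → M}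

theorem pairwise_anticomm_ofFn_ι (hb : Pairwise fun i j => Q.IsOrtho (b i) (b j)) :
    (List.ofFn fun i => ι Q (b i)).Pairwise (fun x y => x * y = -(y * x)) :=
  List.pairwise_ofFn.mpr fun _ _ hij => ι_mul_ι_comm_of_isOrtho (hb hij.ne)

theorem commute_volumeElement_ι (hb : Pairwise fun i j => Q.IsOrtho (b i) (b j)) (hn : Odd n)
    (i : Fin n) : Commute (volumeElement Q b) (ι Q (b i)) := by
  have hsign : (-1 : ℤ) ^ (n - 1) = 1 := Even.neg_one_pow (Nat.Odd.sub_odd hn odd_one)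
  have h := List.mul_prod_of_pairwise_anticomm (pairwise_anticomm_ofFn_ι hb)
    (List.mem_ofFn.mpr ⟨i, rfl⟩)
  rw [List.length_ofFn, hsign, one_smul] at h
  exact h.symm

theorem commute_volumeElement (hb : Pairwise fun i j => Q.IsOrtho (b i) (b j))
    (hspan : Submodule.span R (Set.range b) = ⊤) (hn : Odd n) (x : CliffordAlgebra Q) :
    Commute (volumeElement Q b) x := by
  have hι : ∀ v, Commute (volumeElement Q b) (ι Q v) := by
    intro v
    have hv : v ∈ Submodule.span R (Set.range b) := hspan ▸ Submodule.mem_top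
    induction hv using Submodule.span_induction with
    | mem _ hv =>
      obtain ⟨i, rfl⟩ := hv
      exact commute_volumeElement_ι hb hn i
    | zero => simp
    | add _ _ _ _ h₁ h₂ => rw [map_add]; exact h₁.add_right h₂
    | smul r _ _ h => rw [map_smul]; exact h.smul_right r
  induction x using CliffordAlgebra.induction with
  | algebraMap r => exact Algebra.commute_algebraMap_right r _
  | ι v => exact hι v
  | mul _ _ h₁ h₂ => exact h₁.mul_right h₂
  | add _ _ h₁ h₂ => exact h₁.add_right h₂

theorem volumeElement_mul_self (hb : Pairwise fun i j => Q.IsOrtho (b i) (b j)) :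
    volumeElement Q b * volumeElement Q b
      = algebraMap R _ ((-1) ^ n.choose 2 * ∏ i, Q (b i)) := by
  rw [volumeElement, List.prod_mul_self_of_pairwise_anticomm (pairwise_anticomm_ofFn_ι hb),
    List.length_ofFn, List.map_ofFn]
  have hsq : ((fun y => y * y) ∘ fun i => ι Q (b i)) = algebraMap R _ ∘ fun i => Q (b i) :=
    funext fun i => ι_sq_scalar Q (b i)
  rw [hsq, ← List.map_ofFn, ← map_list_prod, List.prod_ofFn, zsmul_eq_mul]
  simp

end CliffordAlgebra

theorem LinearEquiv.conjAlgEquiv_eq_of_comp_eq {R M N : Type*} [CommRing R]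
    [AddCommGroup M] [Module R M] [AddCommGroup N] [Module R N] (e : M ≃ₗ[R] N)
    {f : Module.End R M} {g : Module.End R N} (h : e.toLinearMap ∘ₗ f = g ∘ₗ e.toLinearMap) :
    e.conjAlgEquiv R f = g := by
  rw [conjAlgEquiv_apply, ← LinearMap.comp_assoc, comp_toLinearMap_symm_eq]
  exact h

namespace RealCliffordRep

open CliffordAlgebra

theorem HasSignature.exists_commute_mul_self_eq_neg_one {V : Type*} [AddCommGroup V]
    [Module ℝ V] {h : LinearMap.BilinForm ℝ V} {p q : ℕ} (hsig : HasSignature h p q)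
    (hpq : ((p : ℤ) - q) % 4 = 3) :
    ∃ ω : CliffordAlgebra h.toQuadraticMap, (∀ x, Commute ω x) ∧ ω * ω = -1 := by
  obtain ⟨b, hb⟩ := hsig
  have hortho : Pairwise fun i j => h.toQuadraticMap.IsOrtho (b i) (b j) := fun i j hij => by
    dsimp only
    rw [← QuadraticMap.isOrtho_polarBilin, QuadraticMap.polarBilin_apply_apply,
      LinearMap.BilinMap.polar_toQuadraticMap, hb, hb, if_neg hij, if_neg hij.symm, add_zero]
  have hprod : ∏ i, h.toQuadraticMap (b i) = (-1) ^ q := by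
    simp [Fin.prod_univ_add, hb]
  have hsign : Odd ((p + q).choose 2 + q) := by
    rw [← Nat.not_even_iff_odd, Nat.even_add, Nat.even_choose_two_iff, Nat.even_iff]
    omega
  refine ⟨volumeElement _ b, commute_volumeElement hortho b.span_eq (by rw [Nat.odd_iff]; omega),
    ?_⟩
  rw [volumeElement_mul_self hortho, hprod, ← pow_add, hsign.neg_one_pow, map_neg, map_one]

variable {V Sg : Type*} [AddCommGroup V] [Module ℝ V] [AddCommGroup Sg] [Module ℝ Sg]
  {Q : QuadraticForm ℝ V} {η : CliffordAlgebra Q →ₐ[ℝ] Module.End ℝ Sg}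

theorem IsIrredReal.bijective_or_eq_zero (hirr : IsIrredReal Q η) {T : Module.End ℝ Sg}
    (hT : ∀ x, T * η x = η x * T) : Function.Bijective T ∨ T = 0 := by
  have hTη : ∀ x w, T (η x w) = η x (T w) := fun x => LinearMap.congr_fun (hT x)
  rcases hirr (LinearMap.ker T) fun x w hw => by rw [LinearMap.mem_ker, hTη, hw, map_zero]
    with hker | hker
  · rcases hirr (LinearMap.range T) (by rintro x _ ⟨u, rfl⟩; exact ⟨η x u, hTη x u⟩)
      with hrange | hrange
    · exact Or.inr (LinearMap.range_eq_bot.mp hrange)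
    · exact Or.inl ⟨LinearMap.ker_eq_bot.mp hker, LinearMap.range_eq_top.mp hrange⟩
  · exact Or.inr (LinearMap.ker_eq_top.mp hker)

theorem IsIrredReal.eq_one_or_eq_neg_one_of_mul_self_eq_one (hirr : IsIrredReal Q η)
    {T : Module.End ℝ Sg} (hT : ∀ x, T * η x = η x * T) (hT2 : T * T = 1) :
    T = 1 ∨ T = -1 := by
  have hcomm : ∀ x, (T - 1) * η x = η x * (T - 1) := fun x => by
    rw [sub_mul, mul_sub, hT, one_mul, mul_one]
  rcases hirr.bijective_or_eq_zero hcomm with hbij | h0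
  · have hprod : (T - 1) * (T + 1) = 0 := by
      rw [show (T - 1) * (T + 1) = T * T - 1 by noncomm_ring, hT2, sub_self]
    have hT1 : T + 1 = 0 := by
      ext w
      exact hbij.injective (by simpa using LinearMap.congr_fun hprod w)
    exact Or.inr (eq_neg_of_add_eq_zero_left hT1)
  · exact Or.inl (sub_eq_zero.mp h0)

theorem IsIrredReal.eq_or_eq_neg_of_mul_self_eq_neg_one (hirr : IsIrredReal Q η)
    {c T : Module.End ℝ Sg} (hc : ∀ x, c * η x = η x * c) (hc2 : c * c = -1)
    (hT : ∀ x, T * η x = η x * T) (hTc : Commute T c) (hT2 : T * T = -1) :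
    T = c ∨ T = -c := by
  have hTc_comm : ∀ x, T * c * η x = η x * (T * c) := fun x => by
    rw [mul_assoc, hc, ← mul_assoc, hT, mul_assoc]
  have hTc2 : T * c * (T * c) = 1 := by
    rw [hTc.symm.mul_mul_mul_comm, hT2, hc2, neg_mul_neg, one_mul]
  have hT_eq : T = -(T * c) * c := by rw [neg_mul, mul_assoc, hc2, mul_neg_one, neg_neg]
  rcases hirr.eq_one_or_eq_neg_one_of_mul_self_eq_one hTc_comm hTc2 with h | h
  · exact Or.inr (by rw [hT_eq, h, neg_one_mul])
  · exact Or.inl (by rw [hT_eq, h, neg_neg, one_mul])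

theorem IsIrredReal.eq_or_eq_neg (hirr : IsIrredReal Q η) {ω : CliffordAlgebra Q}
    (hω : ∀ x, Commute ω x) (hω2 : ω * ω = -1) {J K : Module.End ℝ Sg}
    (hJ : J * J = -1) (hJη : ∀ x, J * η x = η x * J)
    (hK : K * K = -1) (hKη : ∀ x, K * η x = η x * K) : J = K ∨ J = -K := by
  have hc : ∀ x, η ω * η x = η x * η ω := fun x => by rw [← map_mul, ← map_mul, (hω x).eq]
  have hc2 : η ω * η ω = -1 := by rw [← map_mul, hω2, map_neg, map_one]
  rcases hirr.eq_or_eq_neg_of_mul_self_eq_neg_one hc hc2 hJη (hJη ω) hJ with rfl | rfl <;>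
  rcases hirr.eq_or_eq_neg_of_mul_self_eq_neg_one hc hc2 hKη (hKη ω) hK with rfl | rfl <;>
  simp

end RealCliffordRep

open RealCliffordRep in
theorem equivalence_commutes_or_anticommutes_with_complex_structures_general
    {V : Type*} [AddCommGroup V] [Module ℝ V]
    {Sg Sg' : Type*} [AddCommGroup Sg] [Module ℝ Sg]
    [AddCommGroup Sg'] [Module ℝ Sg']
    (h : LinearMap.BilinForm ℝ V)
    (p q : ℕ) (hsig : HasSignature h p q)
    (hmod : ((p : ℤ) - q) % 8 = 3 ∨ ((p : ℤ) - q) % 8 = 7)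
    (η : CliffordAlgebra h.toQuadraticMap →ₐ[ℝ] Module.End ℝ Sg)
    (hirr : IsIrredReal h.toQuadraticMap η)
    (η' : CliffordAlgebra h.toQuadraticMap →ₐ[ℝ] Module.End ℝ Sg')
    (J : Module.End ℝ Sg) (hJ : J * J = -1)
    (hJc : ∀ x : CliffordAlgebra h.toQuadraticMap, J * η x = η x * J)
    (J' : Module.End ℝ Sg') (hJ' : J' * J' = -1)
    (hJ'c : ∀ x : CliffordAlgebra h.toQuadraticMap, J' * η' x = η' x * J')
    (ψ : Sg ≃ₗ[ℝ] Sg')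
    (hψ : ∀ x : CliffordAlgebra h.toQuadraticMap,
      ψ.toLinearMap ∘ₗ η x = η' x ∘ₗ ψ.toLinearMap) :
    ψ.toLinearMap ∘ₗ J = J' ∘ₗ ψ.toLinearMap ∨
      ψ.toLinearMap ∘ₗ J = (-J') ∘ₗ ψ.toLinearMap := by
  obtain ⟨ω, hω, hω2⟩ := hsig.exists_commute_mul_self_eq_neg_one (by omega)
  let e := ψ.conjAlgEquiv ℝ
  have hη' : ∀ x, e (η x) = η' x := fun x => ψ.conjAlgEquiv_eq_of_comp_eq (hψ x)
  have hK : e.symm J' * e.symm J' = -1 := by rw [← map_mul, hJ', map_neg, map_one]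
  have hKη : ∀ x, e.symm J' * η x = η x * e.symm J' := fun x => by
    rw [← e.symm_apply_apply (η x), ← map_mul, ← map_mul, hη', hJ'c]
  have hψK : ψ.toLinearMap ∘ₗ e.symm J' = J' ∘ₗ ψ.toLinearMap := by ext; simp [e]
  rcases hirr.eq_or_eq_neg hω hω2 hJ hJc hK hKη with rfl | rfl
  · exact Or.inl hψK
  · exact Or.inr (by rw [LinearMap.comp_neg, hψK, LinearMap.neg_comp])

open RealCliffordRep in
/-- For `(V,h)` of signature `(p,q)` with `p − q ≡ 3, 7 (mod 8)`, irreducible real Clifford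
representations `η, η'` with commuting complex structures `J, J'`, every equivalence
`ψ : Σ → Σ'` of representations satisfies `ψ∘J = J'∘ψ` or `ψ∘J = -J'∘ψ`. -/
theorem equivalence_commutes_or_anticommutes_with_complex_structures
    {V : Type*} [AddCommGroup V] [Module ℝ V] [FiniteDimensional ℝ V]
    {Sg Sg' : Type*} [AddCommGroup Sg] [Module ℝ Sg] [FiniteDimensional ℝ Sg] [Nontrivial Sg]
    [AddCommGroup Sg'] [Module ℝ Sg'] [FiniteDimensional ℝ Sg'] [Nontrivial Sg']
    (h : LinearMap.BilinForm ℝ V) (hsymm : h.IsSymm) (hnd : h.Nondegenerate)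
    (p q : ℕ) (hsig : HasSignature h p q)
    (hmod : ((p : ℤ) - q) % 8 = 3 ∨ ((p : ℤ) - q) % 8 = 7)
    (η : CliffordAlgebra h.toQuadraticMap →ₐ[ℝ] Module.End ℝ Sg)
    (hirr : IsIrredReal h.toQuadraticMap η)
    (η' : CliffordAlgebra h.toQuadraticMap →ₐ[ℝ] Module.End ℝ Sg')
    (hirr' : IsIrredReal h.toQuadraticMap η')
    (J : Module.End ℝ Sg) (hJ : J * J = -1)
    (hJc : ∀ x : CliffordAlgebra h.toQuadraticMap, J * η x = η x * J)
    (J' : Module.End ℝ Sg') (hJ' : J' * J' = -1)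
    (hJ'c : ∀ x : CliffordAlgebra h.toQuadraticMap, J' * η' x = η' x * J')
    (ψ : Sg ≃ₗ[ℝ] Sg')
    (hψ : ∀ x : CliffordAlgebra h.toQuadraticMap,
      ψ.toLinearMap ∘ₗ η x = η' x ∘ₗ ψ.toLinearMap) :
    ψ.toLinearMap ∘ₗ J = J' ∘ₗ ψ.toLinearMap ∨
      ψ.toLinearMap ∘ₗ J = (-J') ∘ₗ ψ.toLinearMap :=
  equivalence_commutes_or_anticommutes_with_complex_structures_general h p q hsig hmod η hirr η' J
    hJ hJc J' hJ' hJ'c ψ hψ
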